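/- Let x_k denote the unique solution in (0,1) of F_k(x) = 1 for k ≥ 3, where F_n is defined by F_0(x)=1, F_1(x)=x, F_n(x)=2(2-x)F_{n-1}(x)-F_{n-2}(x). Then the sequence (x_k) is strictly decreasing and converges to 1/3. -/

import Mathlib

/-!
Put `x = 2 - (q + q⁻¹) / 2` with `q > 1`; then `q` and `q⁻¹` are the characteristic roots of the
recurrence, and solving it shows that `F k x = 1` means `q ^ k * (3 - q) = 3 * q - 1`. A root `q`
of this equation satisfies `2 < q < 3`, hence `(3 - q) * 2 ^ k < 6`, so `q → 3` and
`x → 2 - (3 + 1/3) / 2 = 1/3`. The roots lie where `t ↦ t ^ k * (3 - t)` is decreasing, and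
comparing the equations for `k` and `k + 1` there shows that they increase with `k`; since
`q ↦ 2 - (q + q⁻¹) / 2` is decreasing on `[1, ∞)`, the `x k` decrease.
-/

noncomputable def F : ℕ → ℝ → ℝ
  | 0, _ => 1
  | 1, x => x
  | (n+2), x => 2 * (2 - x) * F (n+1) x - F n x

noncomputable def param (q : ℝ) : ℝ := 2 - (q + q⁻¹) / 2

lemma F_param {q : ℝ} (hq : 0 < q) (n : ℕ) :
    F n (param q) = ((3 - q) * q ^ n + (3 * q - 1) * q⁻¹ ^ n) / (2 * (q + 1)) := by
  induction n using Nat.twoStepInduction with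
  | zero => simp only [F]; field_simp; ring
  | one => simp only [F, param]; field_simp; ring
  | more n ih₀ ih₁ =>
    rw [F, ih₀, ih₁, param]
    simp only [inv_pow]
    field_simp
    ring

lemma exists_param_eq {y : ℝ} (hy : y < 1) : ∃ q, 1 < q ∧ param q = y := by
  set c := 2 - y
  have hc : 0 < c ^ 2 - 1 := by nlinarith
  have hs := Real.sqrt_pos.mpr hc
  have hs2 := Real.sq_sqrt hc.le
  refine ⟨c + √(c ^ 2 - 1), by linarith, ?_⟩
  have hinv : (c + √(c ^ 2 - 1))⁻¹ = c - √(c ^ 2 - 1) := by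
    apply inv_eq_of_mul_eq_one_right
    linear_combination -hs2
  rw [param, hinv]
  ring

lemma param_lt_param {q r : ℝ} (hq : 1 ≤ q) (hqr : q < r) : param r < param q := by
  have hr : 0 < r := by linarith
  have key : r + r⁻¹ - (q + q⁻¹) = (r - q) * (q * r - 1) / (q * r) := by
    field_simp
    ring
  have : 0 < (r - q) * (q * r - 1) / (q * r) := by
    apply div_pos (mul_pos (by linarith) (by nlinarith)) (by positivity)
  rw [param, param]
  linarith

lemma pow_mul_three_sub_of_F_param_eq_one {k : ℕ} {q : ℝ} (hk : k ≠ 0) (hq : 1 < q)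
    (h : F k (param q) = 1) : q ^ k * (3 - q) = 3 * q - 1 := by
  rw [F_param (by positivity), inv_pow] at h
  have hqk : 1 < q ^ k := one_lt_pow₀ hq hk
  field_simp at h
  have hfactor : (q ^ k - 1) * ((3 - q) * q ^ k - (3 * q - 1)) = 0 := by
    linear_combination h
  have := (mul_eq_zero.mp hfactor).resolve_left (by linarith)
  linarith

lemma Nat.two_mul_succ_le_two_pow {k : ℕ} (hk : 3 ≤ k) : 2 * (k + 1) ≤ 2 ^ k := by
  induction k, hk using Nat.le_induction with
  | base => norm_num
  | succ n hn ih => have := Nat.one_lt_two_pow (n := n) (by omega); rw [pow_succ]; omega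

section root

variable {k : ℕ} {q : ℝ}

lemma lt_three_of_root (hq : 1 < q) (h : q ^ k * (3 - q) = 3 * q - 1) : q < 3 := by
  have : 0 < q ^ k * (3 - q) := by linarith
  exact sub_pos.mp (pos_of_mul_pos_right this (by positivity))

lemma two_lt_of_root (hk : 3 ≤ k) (hq : 1 < q) (h : q ^ k * (3 - q) = 3 * q - 1) : 2 < q := by
  by_contra! hq2
  have h3 : q ^ 3 ≤ q ^ k := pow_le_pow_right₀ hq.le hk
  have hfactor : q ^ 3 * (3 - q) - (3 * q - 1) = (q - 1) * (q + 1) * (1 + (q - 1) * (2 - q)) := by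
    ring
  have : 0 < (q - 1) * (q + 1) * (1 + (q - 1) * (2 - q)) :=
    mul_pos (mul_pos (by linarith) (by linarith)) (by nlinarith)
  nlinarith [mul_le_mul_of_nonneg_right h3 (by linarith : 0 ≤ 3 - q)]

lemma three_sub_mul_two_pow_lt_of_root (hk : 3 ≤ k) (hq : 1 < q)
    (h : q ^ k * (3 - q) = 3 * q - 1) : (3 - q) * 2 ^ k < 6 := by
  have h2 := two_lt_of_root hk hq h
  have h3 := lt_three_of_root hq h
  obtain ⟨j, rfl⟩ : ∃ j, k = j + 1 := ⟨k - 1, by omega⟩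
  have hpow : 2 ^ j * q ≤ q ^ (j + 1) :=
    pow_succ q j ▸ mul_le_mul_of_nonneg_right (pow_le_pow_left₀ zero_le_two h2.le _) (by linarith)
  rw [pow_succ]
  nlinarith [mul_le_mul_of_nonneg_left hpow (by linarith : 0 ≤ 3 - q)]

lemma three_sub_mul_lt_of_root (hk : 3 ≤ k) (hq : 1 < q) (h : q ^ k * (3 - q) = 3 * q - 1) :
    (3 - q) * (k + 1) < 3 := by
  have h3 := lt_three_of_root hq h
  have hk2 : 2 * ((k : ℝ) + 1) ≤ 2 ^ k := by exact_mod_cast Nat.two_mul_succ_le_two_pow hk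
  nlinarith [three_sub_mul_two_pow_lt_of_root hk hq h]

end root

lemma antitoneOn_pow_mul_three_sub (m : ℕ) :
    AntitoneOn (fun t : ℝ => t ^ m * (3 - t)) (Set.Ici (3 * m / (m + 1))) := by
  apply antitoneOn_of_deriv_nonpos (convex_Ici _) (by fun_prop) (by fun_prop)
  intro t ht
  rw [interior_Ici, Set.mem_Ioi, div_lt_iff₀ (by positivity)] at ht
  have ht0 : 0 < t := by nlinarith
  have hderiv : HasDerivAt (fun t : ℝ => t ^ m * (3 - t))
      (m * t ^ (m - 1) * (3 - t) + t ^ m * (0 - 1)) t :=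
    (hasDerivAt_pow m t).mul ((hasDerivAt_const t 3).sub (hasDerivAt_id t))
  rw [hderiv.deriv]
  rcases Nat.eq_zero_or_pos m with rfl | hm
  · simp
  · have hpow : t ^ m = t ^ (m - 1) * t := by rw [← pow_succ]; congr 1; omega
    rw [hpow]
    nlinarith [pow_pos ht0 (m - 1)]

lemma root_lt_root_succ {k : ℕ} {q r : ℝ} (hk : 3 ≤ k)
    (hq : 1 < q) (hqk : q ^ k * (3 - q) = 3 * q - 1)
    (hr : 1 < r) (hrk : r ^ (k + 1) * (3 - r) = 3 * r - 1) : q < r := by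
  by_contra! hrq
  have hmem {t : ℝ} {m : ℕ} (hmk : k ≤ m) (ht : (3 - t) * (m + 1) < 3) :
      t ∈ Set.Ici (3 * (k : ℝ) / (k + 1)) := by
    have : (k : ℝ) ≤ m := by exact_mod_cast hmk
    rw [Set.mem_Ici, div_le_iff₀ (by positivity)]
    nlinarith
  have hanti := antitoneOn_pow_mul_three_sub k
    (hmem (m := k + 1) k.le_succ (three_sub_mul_lt_of_root (by omega) hr hrk))
    (hmem le_rfl (three_sub_mul_lt_of_root hk hq hqk)) hrq
  simp only at hanti
  rw [pow_succ, mul_right_comm] at hrk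
  have : 0 < r ^ k * (3 - r) := by nlinarith
  -- `3 * q - 1 ≤ r ^ k * (3 - r)`, yet `r` times it is `3 * r - 1 ≤ 3 * q - 1`
  nlinarith

lemma abs_param_sub_one_third_le {k : ℕ} {q : ℝ} (hk : 3 ≤ k) (hq : 1 < q)
    (h : q ^ k * (3 - q) = 3 * q - 1) : |param q - 1 / 3| ≤ 3 / k := by
  have h3 := lt_three_of_root hq h
  have hbound := three_sub_mul_lt_of_root hk hq h
  have hq0 : 0 < q := by linarith
  have hk0 : (0 : ℝ) < k := by positivity
  have hval : param q - 1 / 3 = (3 * q - 1) * (3 - q) / (6 * q) := by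
    rw [param]; field_simp; ring
  rw [hval, abs_of_nonneg (div_nonneg (by nlinarith) (by positivity)),
    div_le_div_iff₀ (by positivity) hk0]
  nlinarith

theorem stmt6 (x : ℕ → ℝ)
    (hx : ∀ k, 3 ≤ k → x k ∈ Set.Ioo (0:ℝ) 1 ∧ F k (x k) = 1) :
    (∀ k, 3 ≤ k → x (k+1) < x k) ∧
      Filter.Tendsto x Filter.atTop (nhds (1/3 : ℝ)) := by
  have hroot : ∀ k, 3 ≤ k → ∃ q, 1 < q ∧ q ^ k * (3 - q) = 3 * q - 1 ∧ x k = param q := by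
    intro k hk
    obtain ⟨⟨-, hx1⟩, hF⟩ := hx k hk
    obtain ⟨q, hq, hqx⟩ := exists_param_eq hx1
    rw [← hqx] at hF
    exact ⟨q, hq, pow_mul_three_sub_of_F_param_eq_one (by omega) hq hF, hqx.symm⟩
  refine ⟨fun k hk => ?_, ?_⟩
  · obtain ⟨q, hq, hqk, hxq⟩ := hroot k hk
    obtain ⟨r, hr, hrk, hxr⟩ := hroot (k + 1) (by omega)
    rw [hxq, hxr]
    exact param_lt_param hq.le (root_lt_root_succ hk hq hqk hr hrk)
  · rw [tendsto_iff_dist_tendsto_zero]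
    refine squeeze_zero' (.of_forall fun _ => dist_nonneg)
      (Filter.eventually_atTop.2 ⟨3, fun k hk => ?_⟩) (tendsto_const_div_atTop_nhds_zero_nat 3)
    obtain ⟨q, hq, hqk, hxq⟩ := hroot k hk
    rw [hxq, Real.dist_eq]
    exact abs_param_sub_one_third_le hk hq hqk
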